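/- arXiv:1701.09142 — 2 statements merged into one kernel-verified Lean document; each statement's English description precedes it below -/
import Mathlib

section
/- If R is a coherent betting function and Buy_R(1_A) = Buy_R(1_B) = 1, then Buy_R(1_{A∩B}) = 1. -/
open scoped Classical

variable {Ω : Type*}

/-- A betting function: for each bet `X` there is a threshold `α₀` such that the
agent rejects `X + α` for `α < α₀` and accepts it for `α ≥ α₀`. -/
def IsBettingFunction (R : (Ω → ℝ) → Bool) : Prop :=
  ∀ X : Ω → ℝ, ∃ α₀ : ℝ,
    (∀ α : ℝ, α < α₀ → R (fun ω => X ω + α) = false) ∧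
    (∀ α : ℝ, α₀ ≤ α → R (fun ω => X ω + α) = true)

/-- The buy function: maximum price the agent pays for `X`. -/
noncomputable def Buy (R : (Ω → ℝ) → Bool) (X : Ω → ℝ) : ℝ :=
  sSup {α : ℝ | R (fun ω => X ω - α) = true}

/-- The sell function: minimum price at which the agent sells `X`. -/
noncomputable def Sell (R : (Ω → ℝ) → Bool) (X : Ω → ℝ) : ℝ :=
  sInf {α : ℝ | R (fun ω => α - X ω) = true}

/-- Coherence of a betting function. -/
def Coherent (R : (Ω → ℝ) → Bool) : Prop :=
  (∀ X : Ω → ℝ, (∀ ω, 0 < X ω) → R X = true) ∧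
  (∀ (X : Ω → ℝ) (c : ℝ), 0 < c → R (fun ω => c * X ω) = R X) ∧
  (∀ X Y : Ω → ℝ, R X = true → R Y = true → R (fun ω => X ω + Y ω) = true)

/-- Indicator bet of a set. -/
noncomputable def ind (A : Set Ω) : Ω → ℝ := A.indicator fun _ => 1

/-- A belief valuation. -/
def BeliefValuation (B : Set Ω → Bool) : Prop :=
  (∀ A : Set Ω, B A = true → B Aᶜ = false) ∧
  (∀ A C : Set Ω, B A = true → A ⊆ C → B C = true) ∧
  (∀ A C : Set Ω, B A = true → B C = true → B (A ∩ C) = true) ∧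
  B Set.univ = true

/-- Guaranteed revenue of a bet under a belief valuation. -/
noncomputable def GB (B : Set Ω → Bool) (X : Ω → ℝ) : ℝ :=
  sSup ((fun A => sInf (X '' A)) '' {A | B A = true})

/-- P-consistency: compare guaranteed revenues of combined bets. -/
def PConsistent (R : (Ω → ℝ) → Bool) : Prop :=
  ∀ (N M : ℕ) (X : Fin N → Ω → ℝ) (Y : Fin M → Ω → ℝ),
    (∀ E : Set Ω, E.Nonempty →
      sInf ((fun ω => ∑ i, X i ω) '' E) ≤ sInf ((fun ω => ∑ j, Y j ω) '' E)) →
    ∑ i, Buy R (X i) ≤ ∑ j, Buy R (Y j)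

/-- B-consistency: compare sums of guaranteed revenues of individual bets. -/
def BConsistent (R : (Ω → ℝ) → Bool) : Prop :=
  ∀ (N M : ℕ) (X : Fin N → Ω → ℝ) (Y : Fin M → Ω → ℝ),
    (∀ E : Set Ω, E.Nonempty →
      ∑ i, sInf (X i '' E) ≤ ∑ j, sInf (Y j '' E)) →
    ∑ i, Buy R (X i) ≤ ∑ j, Buy R (Y j)

/-- A (finitely additive) probability distribution with values in `[0,1]`. -/
def IsProbDist (P : Set Ω → ℝ) : Prop :=
  (∀ A : Set Ω, 0 ≤ P A ∧ P A ≤ 1) ∧ P ∅ = 0 ∧ P Set.univ = 1 ∧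
  ∀ A C : Set Ω, P (A ∪ C) = P A + P C - P (A ∩ C)

/-- A basic belief assignment. -/
def IsBBA [Fintype Ω] (m : Finset Ω → ℝ) : Prop :=
  (∀ S : Finset Ω, 0 ≤ m S ∧ m S ≤ 1) ∧ m ∅ = 0 ∧ ∑ S : Finset Ω, m S = 1

/-- Choquet integral of `X` with respect to the bba `m`. -/
noncomputable def Choquet [Fintype Ω] (m : Finset Ω → ℝ) (X : Ω → ℝ) : ℝ :=
  ∑ S : Finset Ω, m S * sInf (X '' (S : Set Ω))

/-- The belief function induced by a bba. -/
noncomputable def BelOf [Fintype Ω] (m : Finset Ω → ℝ) (A : Set Ω) : ℝ :=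
  ∑ S ∈ Finset.univ.filter (fun S : Finset Ω => (S : Set Ω) ⊆ A), m S

/-- Complete monotonicity (condition (B2)). -/
def CompletelyMonotone (Bel : Set Ω → ℝ) : Prop :=
  ∀ (N : ℕ) (A : Fin N → Set Ω),
    ∑ I ∈ (Finset.univ : Finset (Finset (Fin N))).filter (fun I => I ≠ ∅),
      (-1 : ℝ) ^ (I.card + 1) * Bel (⋂ i ∈ I, A i) ≤ Bel (⋃ i, A i)

/-- Shafer belief function. -/
def IsBeliefFunction (Bel : Set Ω → ℝ) : Prop :=
  (∀ A : Set Ω, 0 ≤ Bel A ∧ Bel A ≤ 1) ∧ Bel ∅ = 0 ∧ Bel Set.univ = 1 ∧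
  CompletelyMonotone Bel

lemma neg_const_false (R : (Ω → ℝ) → Bool) (hR : IsBettingFunction R)
    (hC : Coherent R) {c : ℝ} (hc : c < 0) : R (fun _ => c) = false := by
  by_contra h
  have htrue : R (fun _ => c) = true := by simpa using h
  obtain ⟨α₀, hf, ht⟩ := hR (fun _ => (0 : ℝ))
  set α := min α₀ (-1) - 1 with hα
  have hαneg : α < 0 := by
    have := min_le_right α₀ (-1); simp only [hα]; linarith
  have hαlt : α < α₀ := by
    have := min_le_left α₀ (-1); simp only [hα]; linarith
  have hdivpos : 0 < α / c := div_pos_iff.2 (Or.inr ⟨hαneg, hc⟩)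
  have hscale := hC.2.1 (fun _ => c) (α / c) hdivpos
  rw [htrue] at hscale
  have e : (fun ω : Ω => α / c * (fun _ : Ω => c) ω) = fun ω : Ω => (0 : ℝ) + α := by
    funext ω
    rw [zero_add, div_mul_cancel₀ α (ne_of_lt hc)]
  rw [e] at hscale
  rw [hf α hαlt] at hscale
  simp at hscale

lemma R_mono (R : (Ω → ℝ) → Bool) (hR : IsBettingFunction R)
    (hC : Coherent R) {X Y : Ω → ℝ} (hXY : ∀ ω, X ω ≤ Y ω) (hX : R X = true) :
    R Y = true := by
  obtain ⟨α₀, hf, ht⟩ := hR Y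
  have hle : α₀ ≤ 0 := by
    by_contra h
    push_neg at h
    have hpos : ∀ ω, 0 < Y ω - X ω + α₀ / 2 := fun ω => by linarith [hXY ω]
    have h1 := hC.1 _ hpos
    have h2 := hC.2.2 X _ hX h1
    have e : (fun ω => X ω + (Y ω - X ω + α₀ / 2)) = fun ω => Y ω + α₀ / 2 := by
      funext ω; ring
    rw [e, hf (α₀ / 2) (by linarith)] at h2
    simp at h2
  have := ht 0 hle
  simpa using this

lemma neg_false [Fintype Ω] [Nonempty Ω] (R : (Ω → ℝ) → Bool)
    (hR : IsBettingFunction R) (hC : Coherent R) {X : Ω → ℝ}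
    (hX : ∀ ω, X ω < 0) : R X = false := by
  by_contra h
  have hX1 : R X = true := by simpa using h
  obtain ⟨ω₀, -, hmax⟩ := Finset.exists_max_image (Finset.univ : Finset Ω) X
    ⟨Classical.arbitrary Ω, Finset.mem_univ _⟩
  set m := X ω₀ with hm'
  have hm : m < 0 := hX ω₀
  have hpos : ∀ ω, 0 < -X ω + m / 2 := fun ω => by
    have := hmax ω (Finset.mem_univ ω); linarith
  have h1 := hC.1 _ hpos
  have h2 := hC.2.2 X _ hX1 h1
  have e : (fun ω => X ω + (-X ω + m / 2)) = fun _ : Ω => m / 2 := by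
    funext ω; ring
  rw [e, neg_const_false R hR hC (by linarith : m / 2 < 0)] at h2
  simp at h2

lemma buy_eq_of_threshold (R : (Ω → ℝ) → Bool) {X : Ω → ℝ} {α₀ : ℝ}
    (hf : ∀ α : ℝ, α < α₀ → R (fun ω => X ω + α) = false)
    (ht : ∀ α : ℝ, α₀ ≤ α → R (fun ω => X ω + α) = true) :
    Buy R X = -α₀ := by
  have hset : {α : ℝ | R (fun ω => X ω - α) = true} = Set.Iic (-α₀) := by
    ext α
    simp only [Set.mem_setOf_eq, Set.mem_Iic]
    have e : (fun ω => X ω - α) = fun ω => X ω + (-α) := by funext ω; ring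
    rw [e]
    constructor
    · intro h
      by_contra hcon
      push_neg at hcon
      rw [hf (-α) (by linarith)] at h
      simp at h
    · intro h
      exact ht (-α) (by linarith)
  rw [Buy, hset, csSup_Iic]

lemma ind_le_one (S : Set Ω) (ω : Ω) : ind S ω ≤ 1 := by
  by_cases h : ω ∈ S <;> simp [ind, h]

theorem buy_inter_eq_one [Fintype Ω] [Nonempty Ω] (R : (Ω → ℝ) → Bool)
    (hR : IsBettingFunction R) (hC : Coherent R) (A C : Set Ω)
    (hA : Buy R (ind A) = 1) (hCone : Buy R (ind C) = 1) :
    Buy R (ind (A ∩ C)) = 1 := by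
  obtain ⟨a₀, hfa, hta⟩ := hR (ind A)
  obtain ⟨c₀, hfc, htc⟩ := hR (ind C)
  obtain ⟨i₀, hfi, hti⟩ := hR (ind (A ∩ C))
  have hBA := buy_eq_of_threshold R hfa hta
  have hBC := buy_eq_of_threshold R hfc htc
  have hBI := buy_eq_of_threshold R hfi hti
  have ha : a₀ = -1 := by rw [hBA] at hA; linarith
  have hc : c₀ = -1 := by rw [hBC] at hCone; linarith
  have h1 : R (fun ω => ind A ω + (-1)) = true := hta _ (le_of_eq ha)
  have h2 : R (fun ω => ind C ω + (-1)) = true := htc _ (le_of_eq hc)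
  have h3 := hC.2.2 _ _ h1 h2
  have hle : ∀ ω, (ind A ω + (-1)) + (ind C ω + (-1)) ≤ ind (A ∩ C) ω + (-1) := by
    intro ω
    by_cases hA' : ω ∈ A <;> by_cases hC' : ω ∈ C <;>
      simp [ind, hA', hC', Set.mem_inter_iff] <;> norm_num
  have h4 : R (fun ω => ind (A ∩ C) ω + (-1)) = true := R_mono R hR hC hle h3
  have hi1 : i₀ ≤ -1 := by
    by_contra h
    push_neg at h
    rw [hfi (-1) h] at h4
    simp at h4
  have hi2 : -1 ≤ i₀ := by
    by_contra h
    push_neg at h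
    have ht' := hti ((i₀ + -1) / 2) (by linarith)
    have hneg : ∀ ω, ind (A ∩ C) ω + (i₀ + -1) / 2 < 0 := by
      intro ω
      have := ind_le_one (A ∩ C) ω
      linarith
    rw [neg_false R hR hC hneg] at ht'
    simp at ht'
  rw [hBI]
  linarith
end

section
/- A function Bel: 2^Ω → [0,1] is a belief function (Bel(∅)=0, Bel(Ω)=1, completely monotone) if and only if there exists a coherent and B-consistent betting function R such that Bel(A) = Buy_R(1_A) for all A ⊆ Ω. -/
open scoped Classical

variable {Ω : Type*}

/-!
A belief function `Bel` is recovered from its Möbius transform `m S = ∑_{T ⊆ S} ± Bel T`, and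
`m S ≥ 0` follows from complete monotonicity for the family `S \ {s}`, `s ∈ S`, whose intersections
are the sets `S \ K`. So `m` is a basic belief assignment, and one accepts a bet `X` iff its Choquet
integral `∑_S m S · min_S X` is nonnegative. Since the Choquet integral commutes with adding
constants, it is the buying price; as a nonnegative combination of the guaranteed revenues
`min_S X` it is coherent and B-consistent, and it prices `1_A` at `Bel A`.

Conversely, B-consistency prices constants at face value, and on every nonempty `E` the
inclusion–exclusion sum `∑_{I ≠ ∅} (-1)^(|I|+1) min_E 1_{⋂_I A_i}` equals `1` if some `A_i`
contains `E` and `0` otherwise, so it is at most `min_E 1_{⋃ A_i}`. Moving the negative terms to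
the other side turns this into a B-consistency comparison, which is complete monotonicity of
`A ↦ Buy (1_A)`.
-/

open Finset

section sInfImage

variable {E : Set Ω}

lemma sInf_image_add_const (hE : E.Finite) (hne : E.Nonempty) (X : Ω → ℝ) (c : ℝ) :
    sInf ((fun ω => X ω + c) '' E) = sInf (X '' E) + c := by
  rw [← Set.image_image (· + c) X E]
  exact ((monotone_id.add_const c).map_csInf_of_continuousAt (by fun_prop) (hne.image X)
    (hE.image X).bddBelow).symm

lemma sInf_image_const_mul (hE : E.Finite) (hne : E.Nonempty) (X : Ω → ℝ) {c : ℝ}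
    (hc : 0 ≤ c) : sInf ((fun ω => c * X ω) '' E) = c * sInf (X '' E) := by
  rw [← Set.image_image (c * ·) X E]
  exact ((monotone_mul_left_of_nonneg hc).map_csInf_of_continuousAt (by fun_prop)
    (hne.image X) (hE.image X).bddBelow).symm

lemma sInf_image_add_sInf_image_le (hE : E.Finite) (hne : E.Nonempty) (X Y : Ω → ℝ) :
    sInf (X '' E) + sInf (Y '' E) ≤ sInf ((fun ω => X ω + Y ω) '' E) :=
  le_csInf (hne.image _) <| Set.forall_mem_image.2 fun _ hω =>
    add_le_add (csInf_le (hE.image X).bddBelow ⟨_, hω, rfl⟩)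
      (csInf_le (hE.image Y).bddBelow ⟨_, hω, rfl⟩)

lemma sInf_image_const (hne : E.Nonempty) (c : ℝ) : sInf ((fun _ : Ω => c) '' E) = c := by
  rw [hne.image_const, csInf_singleton]

lemma sInf_image_ind (hne : E.Nonempty) (A : Set Ω) :
    sInf (ind A '' E) = if E ⊆ A then 1 else 0 := by
  split_ifs with hEA
  · rw [show ind A '' E = (fun _ => (1 : ℝ)) '' E from
      Set.image_congr fun ω hω => Set.indicator_of_mem (hEA hω) _, sInf_image_const hne]
  · obtain ⟨ω, hωE, hωA⟩ := Set.not_subset.1 hEA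
    refine IsLeast.csInf_eq ⟨⟨ω, hωE, Set.indicator_of_notMem hωA _⟩, ?_⟩
    rintro _ ⟨ω', -, rfl⟩
    exact Set.indicator_nonneg (fun _ _ => zero_le_one) ω'

end sInfImage

lemma Finset.sum_Icc_neg_one_pow_card_sdiff {α : Type*} [DecidableEq α] {T U : Finset α}
    (hTU : T ⊆ U) : ∑ S ∈ Icc T U, (-1 : ℝ) ^ (S \ T).card = if T = U then 1 else 0 := by
  have hinj : Set.InjOn (T ∪ ·) ((U \ T).powerset : Set (Finset α)) := by
    intro V hV W hW hVW
    simp only [coe_powerset, Set.mem_preimage, Set.mem_powerset_iff, coe_subset,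
      subset_sdiff] at hV hW
    rw [← union_sdiff_cancel_left hV.2.symm, ← union_sdiff_cancel_left hW.2.symm]
    exact congrArg (· \ T) hVW
  rw [Icc_eq_image_powerset hTU, sum_image hinj]
  have key := congrArg (Int.cast : ℤ → ℝ) (sum_powerset_neg_one_pow_card (x := U \ T))
  push_cast at key
  rw [sum_congr rfl fun V hV => by
    rw [union_sdiff_cancel_left ((subset_sdiff.1 (mem_powerset.1 hV)).2.symm)], key]
  simp only [sdiff_eq_empty_iff_subset]
  simp only [Subset.antisymm_iff (s₁ := T), hTU, true_and]

lemma Finset.sum_neg_one_pow_mul {ι : Type*} (s : Finset ι) (p : ι → ℕ) (f : ι → ℝ) :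
    ∑ i ∈ s, (-1 : ℝ) ^ p i * f i
      = ∑ i ∈ s.filter (fun i => Even (p i)), f i - ∑ i ∈ s.filter (fun i => ¬Even (p i)), f i := by
  rw [← sum_filter_add_sum_filter_not s (fun i => Even (p i)), sub_eq_add_neg,
    ← sum_neg_distrib]
  congr 1 <;> refine sum_congr rfl fun i hi => ?_
  · rw [(mem_filter.1 hi).2.neg_one_pow, one_mul]
  · rw [(Nat.not_even_iff_odd.1 (mem_filter.1 hi).2).neg_one_pow, neg_one_mul]

lemma Finset.sum_filter_ne_empty_neg_one_pow_succ_mul_ite {ι : Type*} [Fintype ι] [DecidableEq ι]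
    (J : Finset ι) :
    ∑ I ∈ univ.filter (· ≠ ∅), (-1 : ℝ) ^ (I.card + 1) * (if I ⊆ J then 1 else 0)
      = if J = ∅ then 0 else 1 := by
  have halt := congrArg (Int.cast : ℤ → ℝ) (sum_powerset_neg_one_pow_card (x := J))
  push_cast at halt
  rw [← add_sum_erase _ _ (empty_mem_powerset J), card_empty, pow_zero] at halt
  have hfilter : (univ.filter (· ≠ ∅)).filter (· ⊆ J) = J.powerset.erase ∅ := by
    ext I
    simp
  simp only [mul_ite, mul_one, mul_zero]
  rw [← sum_filter, hfilter]
  simp only [pow_succ, mul_neg_one, sum_neg_distrib]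
  split_ifs at halt ⊢ <;> linarith

noncomputable def moebius (Bel : Set Ω → ℝ) (S : Finset Ω) : ℝ :=
  ∑ T ∈ S.powerset, (-1) ^ (S \ T).card * Bel T

lemma sum_powerset_moebius (Bel : Set Ω → ℝ) (U : Finset Ω) :
    ∑ S ∈ U.powerset, moebius Bel S = Bel U := by
  unfold moebius
  calc ∑ S ∈ U.powerset, ∑ T ∈ S.powerset, (-1) ^ (S \ T).card * Bel T
      = ∑ T ∈ U.powerset, ∑ S ∈ Icc T U, (-1) ^ (S \ T).card * Bel T := by
        refine sum_comm' fun S T => ?_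
        simp only [mem_powerset, mem_Icc]
        exact ⟨fun ⟨hSU, hTS⟩ => ⟨⟨hTS, hSU⟩, hTS.trans hSU⟩, fun ⟨h, _⟩ => ⟨h.2, h.1⟩⟩
    _ = ∑ T ∈ U.powerset, if T = U then Bel T else 0 := by
        refine sum_congr rfl fun T hT => ?_
        rw [← sum_mul, sum_Icc_neg_one_pow_card_sdiff (mem_powerset.1 hT),
          ite_mul, one_mul, zero_mul]
    _ = Bel U := by rw [sum_ite_eq', if_pos (mem_powerset_self U)]

lemma moebius_eq_sum_powerset_sdiff (Bel : Set Ω → ℝ) (S : Finset Ω) :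
    moebius Bel S = ∑ K ∈ S.powerset, (-1) ^ K.card * Bel ↑(S \ K) := by
  refine sum_nbij' (S \ ·) (S \ ·) (by simp) (by simp)
    (fun T hT => _root_.sdiff_sdiff_eq_self (mem_powerset.1 hT))
    (fun K hK => _root_.sdiff_sdiff_eq_self (mem_powerset.1 hK)) fun T hT => ?_
  rw [_root_.sdiff_sdiff_eq_self (mem_powerset.1 hT)]

lemma belOf_moebius [Fintype Ω] (Bel : Set Ω → ℝ) (A : Set Ω) :
    BelOf (moebius Bel) A = Bel A := by
  have hfilter : univ.filter (fun S : Finset Ω => (S : Set Ω) ⊆ A) = A.toFinset.powerset := by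
    ext S
    simp [Set.subset_toFinset]
  rw [BelOf, hfilter, sum_powerset_moebius, Set.coe_toFinset]

lemma CompletelyMonotone.sum_powerset_le {Bel : Set Ω → ℝ} (hBel : CompletelyMonotone Bel)
    {ι : Type*} (s : Finset ι) (A : ι → Set Ω) :
    ∑ K ∈ s.powerset.filter (· ≠ ∅), (-1 : ℝ) ^ (K.card + 1) * Bel (⋂ i ∈ K, A i)
      ≤ Bel (⋃ i ∈ s, A i) := by
  let f : Fin s.card ↪ ι := s.equivFin.symm.toEmbedding.trans (Function.Embedding.subtype _)
  have hf : ∀ i, i ∈ s ↔ ∃ k, f k = i := fun i =>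
    ⟨fun hi => ⟨s.equivFin ⟨i, hi⟩, by simp [f]⟩, fun ⟨k, hk⟩ => hk ▸ (s.equivFin.symm k).2⟩
  have hunion : (⋃ k, A (f k)) = ⋃ i ∈ s, A i := by
    ext ω
    simp only [Set.mem_iUnion, hf, exists_prop]
    exact ⟨fun ⟨k, hk⟩ => ⟨_, ⟨k, rfl⟩, hk⟩, fun ⟨_, ⟨k, rfl⟩, hk⟩ => ⟨k, hk⟩⟩
  calc ∑ K ∈ s.powerset.filter (· ≠ ∅), (-1 : ℝ) ^ (K.card + 1) * Bel (⋂ i ∈ K, A i)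
      = ∑ I ∈ (univ : Finset (Finset (Fin s.card))).filter (· ≠ ∅),
          (-1 : ℝ) ^ (I.card + 1) * Bel (⋂ k ∈ I, A (f k)) := by
        symm
        refine sum_bij (fun I _ => I.map f) (fun I hI => ?_)
          (fun I _ J _ h => map_injective f h) (fun K hK => ?_) (fun I _ => ?_)
        · simp only [mem_filter, mem_powerset] at hI ⊢
          refine ⟨fun i hi => ?_, by simpa using hI.2⟩
          obtain ⟨k, -, rfl⟩ := mem_map.1 hi
          exact (hf _).2 ⟨k, rfl⟩
        · simp only [mem_filter, mem_powerset] at hK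
          have hKf : K ⊆ univ.map f := hK.1.trans fun i hi => by
            simpa using (hf i).1 hi
          obtain ⟨u, -, rfl⟩ := subset_map_iff.1 hKf
          exact ⟨u, by simpa using hK.2, rfl⟩
        · rw [card_map, map_eq_image, set_biInter_finset_image]
    _ ≤ Bel (⋃ i ∈ s, A i) := hunion ▸ hBel s.card (A ∘ f)

lemma CompletelyMonotone.add_sub_inter_le {Bel : Set Ω → ℝ} (hBel : CompletelyMonotone Bel)
    (A C : Set Ω) : Bel A + Bel C - Bel (A ∩ C) ≤ Bel (A ∪ C) := by
  have hAC := hBel 2 ![A, C]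
  rw [show (univ : Finset (Finset (Fin 2))).filter (· ≠ ∅) = {{0}, {1}, {0, 1}} by decide,
    sum_insert (by decide), sum_insert (by decide), sum_singleton,
    show (⋃ i, ![A, C] i) = A ∪ C by ext; simp [Fin.exists_fin_two]] at hAC
  norm_num at hAC
  linarith

lemma IsBeliefFunction.monotone {Bel : Set Ω → ℝ} (hBel : IsBeliefFunction Bel) :
    Monotone Bel := by
  intro A B hAB
  obtain ⟨hrange, hempty, -, hcm⟩ := hBel
  have := hcm.add_sub_inter_le A (B \ A)
  rw [Set.union_sdiff_cancel hAB, Set.inter_sdiff_self, hempty] at this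
  linarith [(hrange (B \ A)).1]

lemma IsBeliefFunction.moebius_nonneg [Fintype Ω] {Bel : Set Ω → ℝ}
    (hBel : IsBeliefFunction Bel) (S : Finset Ω) : 0 ≤ moebius Bel S := by
  have hinter : ∀ K ∈ S.powerset.filter (· ≠ ∅), ⋂ k ∈ K, ((S : Set Ω) \ {k}) = ↑(S \ K) := by
    intro K hK
    obtain ⟨k₀, hk₀⟩ := nonempty_iff_ne_empty.2 (mem_filter.1 hK).2
    ext ω
    simp only [Set.mem_iInter, Set.mem_sdiff, Set.mem_singleton_iff, coe_sdiff, mem_coe]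
    exact ⟨fun h => ⟨(h k₀ hk₀).1, fun hω => (h ω hω).2 rfl⟩,
      fun h k hk => ⟨h.1, fun hωk => h.2 (hωk ▸ hk)⟩⟩
  have hunion : Bel (⋃ k ∈ S, ((S : Set Ω) \ {k})) ≤ Bel S :=
    hBel.monotone (Set.iUnion₂_subset fun _ _ => Set.sdiff_subset)
  have hcm := hBel.2.2.2.sum_powerset_le S (fun k => (S : Set Ω) \ {k})
  rw [sum_congr rfl fun K hK => by rw [hinter K hK], filter_ne'] at hcm
  rw [moebius_eq_sum_powerset_sdiff, ← add_sum_erase _ _ (empty_mem_powerset S)]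
  simp only [pow_succ, mul_neg_one, neg_mul, sum_neg_distrib] at hcm
  simp only [card_empty, pow_zero, one_mul, sdiff_empty]
  linarith

lemma IsBeliefFunction.isBBA_moebius [Fintype Ω] {Bel : Set Ω → ℝ}
    (hBel : IsBeliefFunction Bel) : IsBBA (moebius Bel) := by
  have hsum : ∑ S : Finset Ω, moebius Bel S = 1 := by
    rw [← powerset_univ, sum_powerset_moebius, coe_univ, hBel.2.2.1]
  refine ⟨fun S => ⟨hBel.moebius_nonneg S, ?_⟩, by simp [moebius, hBel.2.1], hsum⟩
  exact hsum ▸ single_le_sum (fun T _ => hBel.moebius_nonneg T) (mem_univ S)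

noncomputable def acceptNonneg (F : (Ω → ℝ) → ℝ) (X : Ω → ℝ) : Bool := decide (0 ≤ F X)

section acceptNonneg
variable {F : (Ω → ℝ) → ℝ}

lemma isBettingFunction_acceptNonneg (hF : ∀ X c, F (fun ω => X ω + c) = F X + c) :
    IsBettingFunction (acceptNonneg F) := fun X =>
  ⟨-F X, fun α hα => by simp only [acceptNonneg, hF, decide_eq_false_iff_not]; linarith,
    fun α hα => by simp only [acceptNonneg, hF, decide_eq_true_eq]; linarith⟩

lemma buy_acceptNonneg (hF : ∀ X c, F (fun ω => X ω + c) = F X + c) (X : Ω → ℝ) :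
    Buy (acceptNonneg F) X = F X := by
  have hset : {α | acceptNonneg F (fun ω => X ω - α) = true} = Set.Iic (F X) := by
    ext α
    simp only [sub_eq_add_neg, acceptNonneg, hF, Set.mem_ofPred_eq, decide_eq_true_eq,
      Set.mem_Iic]
    constructor <;> intro <;> linarith
  rw [Buy, hset, csSup_Iic]

lemma coherent_acceptNonneg (hpos : ∀ X, (∀ ω, 0 < X ω) → 0 ≤ F X)
    (hmul : ∀ X c, 0 < c → F (fun ω => c * X ω) = c * F X)
    (hsuperadd : ∀ X Y, F X + F Y ≤ F (fun ω => X ω + Y ω)) : Coherent (acceptNonneg F) := by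
  refine ⟨fun X hX => decide_eq_true (hpos X hX), fun X c hc => ?_, fun X Y hX hY => ?_⟩
  · simp only [acceptNonneg, hmul X c hc, mul_nonneg_iff_of_pos_left hc]
  · simp only [acceptNonneg, decide_eq_true_eq] at hX hY ⊢
    linarith [hsuperadd X Y]

end acceptNonneg

section Choquet
variable [Fintype Ω] {m : Finset Ω → ℝ}

-- `sInf ∅ = 0`, so the `S = ∅` term of a Choquet integral vanishes.

lemma choquet_add_const (hm : IsBBA m) (X : Ω → ℝ) (c : ℝ) :
    Choquet m (fun ω => X ω + c) = Choquet m X + c := by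
  obtain ⟨-, hempty, hsum⟩ := hm
  have hterm : ∀ S : Finset Ω, m S * sInf ((fun ω => X ω + c) '' S)
      = m S * sInf (X '' S) + m S * c := by
    intro S
    rcases S.eq_empty_or_nonempty with rfl | hS
    · simp [hempty]
    · rw [sInf_image_add_const S.finite_toSet hS X c, mul_add]
  rw [Choquet, sum_congr rfl fun S _ => hterm S, sum_add_distrib,
    ← sum_mul, hsum, one_mul, Choquet]

lemma choquet_const_mul (X : Ω → ℝ) {c : ℝ} (hc : 0 ≤ c) :
    Choquet m (fun ω => c * X ω) = c * Choquet m X := by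
  rw [Choquet, Choquet, mul_sum]
  refine sum_congr rfl fun S _ => ?_
  rcases S.eq_empty_or_nonempty with rfl | hS
  · simp
  · rw [sInf_image_const_mul S.finite_toSet hS X hc, mul_left_comm]

lemma sum_choquet_le_sum_choquet (hm : ∀ S, 0 ≤ m S) {ι κ : Type*} [Fintype ι] [Fintype κ]
    (X : ι → Ω → ℝ) (Y : κ → Ω → ℝ)
    (h : ∀ E : Set Ω, E.Nonempty → ∑ i, sInf (X i '' E) ≤ ∑ j, sInf (Y j '' E)) :
    ∑ i, Choquet m (X i) ≤ ∑ j, Choquet m (Y j) := by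
  simp only [Choquet]
  rw [sum_comm, sum_comm (γ := κ)]
  refine sum_le_sum fun S _ => ?_
  rw [← mul_sum, ← mul_sum]
  rcases S.eq_empty_or_nonempty with rfl | hS
  · simp
  · exact mul_le_mul_of_nonneg_left (h S (coe_nonempty.2 hS)) (hm S)

lemma choquet_ind (hm : IsBBA m) (A : Set Ω) : Choquet m (ind A) = BelOf m A := by
  rw [Choquet, BelOf, sum_filter]
  refine sum_congr rfl fun S _ => ?_
  rcases S.eq_empty_or_nonempty with rfl | hS
  · simp [hm.2.1]
  · rw [sInf_image_ind (coe_nonempty.2 hS), mul_ite, mul_one, mul_zero]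

end Choquet

lemma IsBBA.exists_bettingFunction [Fintype Ω] {m : Finset Ω → ℝ} (hm : IsBBA m) :
    ∃ R : (Ω → ℝ) → Bool, IsBettingFunction R ∧ Coherent R ∧ BConsistent R ∧
      ∀ A : Set Ω, BelOf m A = Buy R (ind A) := by
  have hnonneg : ∀ S, 0 ≤ m S := fun S => (hm.1 S).1
  have hbuy := buy_acceptNonneg (choquet_add_const hm)
  refine ⟨acceptNonneg (Choquet m), isBettingFunction_acceptNonneg (choquet_add_const hm),
    coherent_acceptNonneg (fun X hX => ?_) (fun X c hc => choquet_const_mul X hc.le)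
      (fun X Y => ?_), fun N M X Y h => ?_, fun A => by rw [hbuy, choquet_ind hm]⟩
  · simpa using sum_choquet_le_sum_choquet hnonneg (Fin.elim0 : Fin 0 → Ω → ℝ) ![X]
      fun E hE => by simpa using le_csInf (hE.image X) fun _ ⟨ω, _, hω⟩ => hω ▸ (hX ω).le
  · simpa [Fin.sum_univ_two] using sum_choquet_le_sum_choquet hnonneg ![X, Y]
      ![fun ω => X ω + Y ω] fun E hE => by
        simpa [Fin.sum_univ_two] using
          sInf_image_add_sInf_image_le (Set.toFinite E) hE X Y
  · simpa only [hbuy] using sum_choquet_le_sum_choquet hnonneg X Y h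

section Buy
variable {R : (Ω → ℝ) → Bool}

lemma IsBettingFunction.accept_sub_iff (hR : IsBettingFunction R) (X : Ω → ℝ) (α : ℝ) :
    R (fun ω => X ω - α) = true ↔ α ≤ Buy R X := by
  obtain ⟨α₀, hlt, hge⟩ := hR X
  have hacc : ∀ α, R (fun ω => X ω - α) = true ↔ α ≤ -α₀ := fun α => by
    simp only [sub_eq_add_neg]
    exact ⟨fun h => le_neg_of_le_neg (not_lt.1 fun h' => by simp [hlt _ h'] at h),
      fun h => hge _ (le_neg_of_le_neg h)⟩
  have hbuy : Buy R X = -α₀ := by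
    rw [Buy, show {α | R (fun ω => X ω - α) = true} = Set.Iic (-α₀) from Set.ext hacc,
      csSup_Iic]
  rw [hacc, hbuy]

lemma IsBettingFunction.buy_add_const (hR : IsBettingFunction R) (X : Ω → ℝ) (c : ℝ) :
    Buy R (fun ω => X ω + c) = Buy R X + c := by
  have hset : {α | R (fun ω => X ω + c - α) = true} = Set.Iic (Buy R X + c) := by
    ext α
    rw [Set.mem_ofPred_eq, Set.mem_Iic, ← sub_le_iff_le_add, ← hR.accept_sub_iff]
    exact Eq.congr_left (congrArg R (funext fun ω => by ring))
  rw [Buy, hset, csSup_Iic]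

lemma BConsistent.sum_le (hB : BConsistent R) {ι κ : Type*} (s : Finset ι) (t : Finset κ)
    (X : ι → Ω → ℝ) (Y : κ → Ω → ℝ)
    (h : ∀ E : Set Ω, E.Nonempty → ∑ i ∈ s, sInf (X i '' E) ≤ ∑ j ∈ t, sInf (Y j '' E)) :
    ∑ i ∈ s, Buy R (X i) ≤ ∑ j ∈ t, Buy R (Y j) := by
  have hs (f : ι → ℝ) : ∑ i ∈ s, f i = ∑ k, f (s.equivFin.symm k) :=
    ((Equiv.sum_comp s.equivFin.symm (fun i => f i)).trans (sum_coe_sort s f)).symm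
  have ht (f : κ → ℝ) : ∑ j ∈ t, f j = ∑ k, f (t.equivFin.symm k) :=
    ((Equiv.sum_comp t.equivFin.symm (fun j => f j)).trans (sum_coe_sort t f)).symm
  rw [hs, ht]
  exact hB s.card t.card (fun k => X (s.equivFin.symm k)) (fun k => Y (t.equivFin.symm k))
    fun E hE => by simpa only [hs, ht] using h E hE

lemma BConsistent.buy_le (hB : BConsistent R) {X Y : Ω → ℝ}
    (h : ∀ E : Set Ω, E.Nonempty → sInf (X '' E) ≤ sInf (Y '' E)) : Buy R X ≤ Buy R Y := by
  simpa using hB.sum_le (univ : Finset Unit) (univ : Finset Unit) (fun _ => X) (fun _ => Y)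
    fun E hE => by simpa using h E hE

lemma BConsistent.buy_const (hB : BConsistent R) (hR : IsBettingFunction R) (c : ℝ) :
    Buy R (fun _ => c) = c := by
  have hzero : Buy R (fun _ => 0) = 0 := by
    have hcmp (s t : Finset Unit) :=
      hB.sum_le s t (fun _ _ => 0) (fun _ _ => 0) fun E hE => by simp [sInf_image_const hE]
    exact le_antisymm (by simpa using hcmp univ ∅) (by simpa using hcmp ∅ univ)
  simpa [hzero] using hR.buy_add_const (fun _ => 0) c

lemma BConsistent.sum_neg_one_pow_mul_le (hB : BConsistent R) {ι : Type*} (s : Finset ι)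
    (p : ι → ℕ) (X : ι → Ω → ℝ) (Y : Ω → ℝ)
    (h : ∀ E : Set Ω, E.Nonempty →
      ∑ i ∈ s, (-1 : ℝ) ^ p i * sInf (X i '' E) ≤ sInf (Y '' E)) :
    ∑ i ∈ s, (-1 : ℝ) ^ p i * Buy R (X i) ≤ Buy R Y := by
  have hsplit := hB.sum_le (s.filter (fun i => Even (p i)))
    (insertNone (s.filter (fun i => ¬Even (p i)))) X (fun o => o.elim Y X) fun E hE => by
      have := h E hE
      rw [sum_neg_one_pow_mul] at this
      rw [sum_insertNone]
      simp only [Option.elim]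
      linarith
  rw [sum_insertNone] at hsplit
  simp only [Option.elim] at hsplit
  rw [sum_neg_one_pow_mul]
  linarith

end Buy

lemma isBeliefFunction_buy_ind {R : (Ω → ℝ) → Bool} (hR : IsBettingFunction R)
    (hB : BConsistent R) : IsBeliefFunction (fun A => Buy R (ind A)) := by
  have hind_nonneg : ∀ E A : Set Ω, E.Nonempty → 0 ≤ sInf (ind A '' E) := by
    intro E A hE
    rw [sInf_image_ind hE]
    split_ifs <;> norm_num
  refine ⟨fun A => ⟨?_, ?_⟩, ?_, ?_, fun N A => ?_⟩
  · rw [← hB.buy_const hR 0]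
    exact hB.buy_le fun E hE => by rw [sInf_image_const hE]; exact hind_nonneg E A hE
  · rw [← hB.buy_const hR 1]
    refine hB.buy_le fun E hE => ?_
    rw [sInf_image_ind hE, sInf_image_const hE]
    split_ifs <;> norm_num
  · simpa [ind] using hB.buy_const hR 0
  · simpa [ind] using hB.buy_const hR 1
  · refine hB.sum_neg_one_pow_mul_le _ _ _ _ fun E hE => ?_
    let J := univ.filter fun i => E ⊆ A i
    have hinter : ∀ I : Finset (Fin N), sInf (ind (⋂ i ∈ I, A i) '' E) = if I ⊆ J then 1 else 0 :=
      fun I => by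
        rw [sInf_image_ind hE]
        exact if_congr (by simp [J, subset_iff, Set.subset_iInter_iff]) rfl rfl
    simp only [hinter, sum_filter_ne_empty_neg_one_pow_succ_mul_ite]
    split_ifs with hJ
    · exact hind_nonneg E _ hE
    · obtain ⟨j, hj⟩ := nonempty_iff_ne_empty.2 hJ
      rw [sInf_image_ind hE, if_pos ((mem_filter.1 hj).2.trans (Set.subset_iUnion A j))]

theorem beliefFunction_iff_betting_general [Fintype Ω] (Bel : Set Ω → ℝ) :
    IsBeliefFunction Bel ↔
      ∃ R : (Ω → ℝ) → Bool, IsBettingFunction R ∧ Coherent R ∧ BConsistent R ∧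
        ∀ A : Set Ω, Bel A = Buy R (ind A) := by
  constructor
  · intro hBel
    obtain ⟨R, hbet, hcoh, hcons, hbuy⟩ := hBel.isBBA_moebius.exists_bettingFunction
    exact ⟨R, hbet, hcoh, hcons, fun A => by rw [← hbuy, belOf_moebius]⟩
  · rintro ⟨R, hbet, -, hcons, hBel⟩
    rw [show Bel = fun A => Buy R (ind A) from funext hBel]
    exact isBeliefFunction_buy_ind hbet hcons

theorem beliefFunction_iff_betting [Fintype Ω] [Nonempty Ω] (Bel : Set Ω → ℝ) :
    IsBeliefFunction Bel ↔
      ∃ R : (Ω → ℝ) → Bool, IsBettingFunction R ∧ Coherent R ∧ BConsistent R ∧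
        ∀ A : Set Ω, Bel A = Buy R (ind A) :=
  beliefFunction_iff_betting_general Bel
end
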